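/- Let H be a Hilbert space, V a bounded self-adjoint operator on H, T a bounded invertible operator on H, and E ∈ ℂ with complex conjugate Ē. Define T^E = ((E·1 - V)T⁻¹, -T*; T⁻¹, 0) on H ⊕ H and I = (0, -1; 1, 0). Then (T^Ē)* I T^E = I. -/
import Mathlib


open ContinuousLinearMap

variable {H : Type*}

/-- The block operator `(A B; C D)` on the Hilbert space `H ⊕₂ H`. -/
noncomputable def blockOp [NormedAddCommGroup H] [InnerProductSpace ℂ H]
    (A B C D : H →L[ℂ] H) : WithLp 2 (H × H) →L[ℂ] WithLp 2 (H × H) :=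
  ((WithLp.prodContinuousLinearEquiv 2 ℂ H H).symm : (H × H) →L[ℂ] WithLp 2 (H × H)) ∘L
    (((A ∘L fst ℂ H H + B ∘L snd ℂ H H).prod (C ∘L fst ℂ H H + D ∘L snd ℂ H H)) ∘L
      ((WithLp.prodContinuousLinearEquiv 2 ℂ H H) : WithLp 2 (H × H) →L[ℂ] (H × H)))


section helperLemmas
variable [NormedAddCommGroup H] [InnerProductSpace ℂ H]

lemma blockOp_apply (A B C D : H →L[ℂ] H) (x : WithLp 2 (H × H)) :
    blockOp A B C D x = (WithLp.equiv 2 (H × H)).symm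
      (A (WithLp.equiv 2 (H × H) x).1 + B (WithLp.equiv 2 (H × H) x).2,
       C (WithLp.equiv 2 (H × H) x).1 + D (WithLp.equiv 2 (H × H) x).2) := by
  rfl

lemma blockOp_comp (A B C D A' B' C' D' : H →L[ℂ] H) :
    blockOp A B C D ∘L blockOp A' B' C' D' =
      blockOp (A ∘L A' + B ∘L C') (A ∘L B' + B ∘L D')
        (C ∘L A' + D ∘L C') (C ∘L B' + D ∘L D') := by
  ext x <;> simp [blockOp_apply, map_add] <;> constructor <;> abel

variable [CompleteSpace H]

lemma blockOp_adjoint (A B C D : H →L[ℂ] H) :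
    ContinuousLinearMap.adjoint (blockOp A B C D) =
      blockOp (adjoint A) (adjoint C) (adjoint B) (adjoint D) := by
  symm
  rw [eq_adjoint_iff]
  intro x y
  simp [blockOp_apply, WithLp.prod_inner_apply, inner_add_left, inner_add_right,
    adjoint_inner_left]
  ring

end helperLemmas

/-- The transfer operator `𝒯^E = ((E·1 - V)T⁻¹, -T*; T⁻¹, 0)`, where `S = T⁻¹`. -/
noncomputable def transferOp [NormedAddCommGroup H] [InnerProductSpace ℂ H] [CompleteSpace H]
    (V T S : H →L[ℂ] H) (E : ℂ) : WithLp 2 (H × H) →L[ℂ] WithLp 2 (H × H) :=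
  blockOp ((E • (1 : H →L[ℂ] H) - V) ∘L S) (-(ContinuousLinearMap.adjoint T)) S 0

/-- for a bounded self-adjoint `V`, an invertible bounded `T` (with two-sided
inverse `S`) and complex energy `E`, one has `(𝒯^Ē)* ℐ 𝒯^E = ℐ` with `ℐ = (0,-1;1,0)`. -/
theorem transfer_operator_generalized_I_unitary
    [NormedAddCommGroup H] [InnerProductSpace ℂ H] [CompleteSpace H]
    (V T S : H →L[ℂ] H) (hV : IsSelfAdjoint V)
    (hTS : T ∘L S = 1) (hST : S ∘L T = 1) (E : ℂ) :
    ContinuousLinearMap.adjoint (transferOp V T S (starRingEnd ℂ E))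
      ∘L (blockOp (0 : H →L[ℂ] H) (-1) 1 0 ∘L transferOp V T S E)
    = blockOp (0 : H →L[ℂ] H) (-1) 1 0 := by
  have hA : adjoint ((starRingEnd ℂ E • (1 : H →L[ℂ] H) - V) ∘L S)
      = adjoint S ∘L (E • (1 : H →L[ℂ] H) - V) := by
    rw [adjoint_comp]
    congr 1
    rw [← star_eq_adjoint]
    simp [star_smul, hV.star_eq]
  unfold transferOp
  rw [blockOp_comp, blockOp_adjoint, hA, blockOp_comp]
  have h1 : ContinuousLinearMap.adjoint S ∘L ContinuousLinearMap.adjoint T = 1 := by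
    rw [← adjoint_comp, hTS, ← star_eq_adjoint, star_one]
  have h2 : ContinuousLinearMap.adjoint (-ContinuousLinearMap.adjoint T) = -T := by
    rw [← star_eq_adjoint, ← star_eq_adjoint, star_neg, star_star]
  have h3 : ContinuousLinearMap.adjoint (0 : H →L[ℂ] H) = 0 := by
    rw [← star_eq_adjoint, star_zero]
  rw [h2, h3]
  congr 1
  · simp [comp_assoc, one_def]
  · simp [comp_assoc, one_def, h1]
  · simp [comp_assoc, one_def, hTS]
  · simp
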